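/- arXiv:1910.00959 — 6 statements merged into one kernel-verified Lean document; each statement's English description precedes it below -/
import Mathlib

section
/- Let a > 0, α > 0, b > 0 and 0 ≤ r₀ < R be real numbers, and set δ = 2/α. Then ∫_{r₀}^{R} γ(a, b r^α) · r dr = (b^a / (a(αa + 2))) · [ R^{αa+2} · F(−b R^α) − r₀^{αa+2} · F(−b r₀^α) ], where F(z) = ∑_{n=0}^{∞} ((a)_n (a+δ)_n / ((a+1)_n (a+δ+1)_n n!)) z^n and this series converges absolutely for every real z. (This is the closed-form outage-probability integral of Theorems 1 and 2, with the generalized hypergeometric function ₂F₂(a, a+δ; a+1, a+δ+1; z) written as its defining series.) -/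
open MeasureTheory

/-- Lower incomplete gamma function `γ(a, x) = ∫₀ˣ t^(a-1) e^(-t) dt`. -/
noncomputable def lowerGamma (a x : ℝ) : ℝ := ∫ t in (0:ℝ)..x, t ^ (a - 1) * Real.exp (-t)

/-- Pochhammer symbol `(q)_n = Γ(q+n)/Γ(q)`. -/
noncomputable def poch (q : ℝ) (n : ℕ) : ℝ := Real.Gamma (q + n) / Real.Gamma q

/-- The `n`-th term coefficient of the series of `₂F₂(a, a+δ; a+1, a+δ+1; ·)`. -/
noncomputable def hypTerm (a δ : ℝ) (n : ℕ) : ℝ :=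
  poch a n * poch (a + δ) n / (poch (a + 1) n * poch (a + δ + 1) n * n.factorial)

/-- The generalized hypergeometric series `₂F₂(a, a+δ; a+1, a+δ+1; z)`. -/
noncomputable def hypF (a δ z : ℝ) : ℝ := ∑' n : ℕ, hypTerm a δ n * z ^ n

lemma poch_pos {q : ℝ} (hq : 0 < q) (n : ℕ) : 0 < poch q n :=
  div_pos (Real.Gamma_pos_of_pos (by positivity)) (Real.Gamma_pos_of_pos hq)

lemma poch_succ {q : ℝ} (hq : 0 < q) (n : ℕ) :
    poch (q + 1) n = (q + n) / q * poch q n := by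
  unfold poch
  have h1 : Real.Gamma (q + 1 + n) = (q + n) * Real.Gamma (q + n) := by
    rw [show q + 1 + (n : ℝ) = (q + n) + 1 by ring]
    exact Real.Gamma_add_one (by positivity)
  have h2 : Real.Gamma (q + 1) = q * Real.Gamma q := Real.Gamma_add_one hq.ne'
  have h3 := (Real.Gamma_pos_of_pos hq).ne'
  have h4 : Real.Gamma (q + n) ≠ 0 := (Real.Gamma_pos_of_pos (by positivity)).ne'
  rw [h1, h2]
  field_simp

lemma hypTerm_eq {a δ : ℝ} (ha : 0 < a) (hδ : 0 < δ) (n : ℕ) :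
    hypTerm a δ n = a * (a + δ) / ((a + n) * (a + δ + n) * n.factorial) := by
  unfold hypTerm
  rw [poch_succ ha, poch_succ (show (0:ℝ) < a + δ by positivity)]
  have h1 := (poch_pos ha n).ne'
  have h2 := (poch_pos (show (0:ℝ) < a + δ by positivity) n).ne'
  have h3 : (a + (n:ℝ)) ≠ 0 := by positivity
  have h4 : (a + δ + (n:ℝ)) ≠ 0 := by positivity
  have h5 : ((n.factorial : ℝ)) ≠ 0 := by positivity
  field_simp

lemma hypTerm_summable {a δ : ℝ} (ha : 0 < a) (hδ : 0 < δ) (z : ℝ) :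
    Summable fun n : ℕ => |hypTerm a δ n * z ^ n| := by
  refine Summable.of_nonneg_of_le (fun n => abs_nonneg _) (fun n => ?_)
    (Real.summable_pow_div_factorial |z|)
  rw [hypTerm_eq ha hδ, abs_mul, abs_pow]
  have h1 : (0:ℝ) < a + n := by positivity
  have h2 : (0:ℝ) < a + δ + n := by positivity
  have h3 : (0:ℝ) < (n.factorial : ℝ) := by positivity
  rw [abs_of_pos (show (0:ℝ) < a * (a + δ) / ((a + n) * (a + δ + n) * n.factorial) by positivity)]
  have he : a * (a + δ) / ((a + n) * (a + δ + n) * n.factorial) * |z| ^ n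
      = (a * (a + δ) / ((a + n) * (a + δ + n))) * (|z| ^ n / n.factorial) := by
    field_simp
  rw [he]
  have hle : a * (a + δ) / ((a + n) * (a + δ + n)) ≤ 1 := by
    rw [div_le_one (by positivity)]
    nlinarith [Nat.cast_nonneg (α := ℝ) n, hδ.le, ha.le]
  calc a * (a + δ) / ((a + n) * (a + δ + n)) * (|z| ^ n / n.factorial)
      ≤ 1 * (|z| ^ n / n.factorial) := by
        apply mul_le_mul_of_nonneg_right hle (by positivity)
    _ = |z| ^ n / n.factorial := one_mul _

lemma integral_tsum_rpow (c : ℕ → ℝ) (e : ℕ → ℝ) {x0 x1 : ℝ}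
    (h0 : 0 ≤ x0) (h01 : x0 ≤ x1) (he : ∀ n, -1 < e n)
    (hs : Summable fun n => |c n| * (x1 ^ (e n + 1) / (e n + 1))) :
    ∫ t in Set.Ioc x0 x1, ∑' n : ℕ, c n * t ^ e n =
      ∑' n : ℕ, c n * ((x1 ^ (e n + 1) - x0 ^ (e n + 1)) / (e n + 1)) := by
  have hepos : ∀ n, (0:ℝ) < e n + 1 := fun n => by linarith [he n]
  have hint : ∀ n, IntegrableOn (fun t => c n * t ^ e n) (Set.Ioc x0 x1) := by
    intro n
    have := (intervalIntegral.intervalIntegrable_rpow' (he n) (a := x0) (b := x1)).const_mul (c n)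
    rwa [intervalIntegrable_iff_integrableOn_Ioc_of_le h01] at this
  have hval : ∀ n, ∫ t in Set.Ioc x0 x1, t ^ e n =
      (x1 ^ (e n + 1) - x0 ^ (e n + 1)) / (e n + 1) := by
    intro n
    rw [← intervalIntegral.integral_of_le h01, integral_rpow (Or.inl (he n))]
  have hnorm : ∀ n, (∫ t in Set.Ioc x0 x1, ‖c n * t ^ e n‖) =
      |c n| * ((x1 ^ (e n + 1) - x0 ^ (e n + 1)) / (e n + 1)) := by
    intro n
    have hcongr : ∀ t ∈ Set.Ioc x0 x1, ‖c n * t ^ e n‖ = |c n| * t ^ e n := by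
      intro t ht
      have htpos : 0 ≤ t := le_trans h0 ht.1.le
      rw [Real.norm_eq_abs, abs_mul, abs_of_nonneg (Real.rpow_nonneg htpos _)]
    rw [setIntegral_congr_fun measurableSet_Ioc hcongr, integral_const_mul, hval n]
  have hsum : Summable fun n => ∫ t in Set.Ioc x0 x1, ‖c n * t ^ e n‖ := by
    refine Summable.of_nonneg_of_le (fun n => ?_) (fun n => ?_) hs
    · rw [hnorm n]
      have h := Real.rpow_le_rpow h0 h01 (hepos n).le
      exact mul_nonneg (abs_nonneg _) (div_nonneg (sub_nonneg.2 h) (hepos n).le)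
    · rw [hnorm n]
      have h := Real.rpow_nonneg h0 (e n + 1)
      have h2 := hepos n
      gcongr <;> linarith
  have := integral_tsum_of_summable_integral_norm (μ := volume.restrict (Set.Ioc x0 x1))
    (F := fun n t => c n * t ^ e n) hint hsum
  rw [← this]
  refine tsum_congr fun n => ?_
  rw [integral_const_mul, hval n]

lemma lowerGamma_eq_tsum {a x : ℝ} (ha : 0 < a) (hx : 0 < x) :
    lowerGamma a x = ∑' n : ℕ, ((-1) ^ n / n.factorial) * (x ^ (a + n) / (a + n)) := by
  have hcongr : ∀ t ∈ Set.Ioc (0:ℝ) x, t ^ (a - 1) * Real.exp (-t)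
      = ∑' n : ℕ, ((-1) ^ n / n.factorial : ℝ) * t ^ (a - 1 + n) := by
    intro t ht
    have ht0 : 0 < t := ht.1
    have hexp : Real.exp (-t) = ∑' n : ℕ, (-t) ^ n / n.factorial := by
      rw [Real.exp_eq_exp_ℝ, NormedSpace.exp_eq_tsum_div]
    rw [hexp, ← tsum_mul_left]
    refine tsum_congr fun n => ?_
    rw [neg_pow, Real.rpow_add ht0, Real.rpow_natCast]
    ring
  rw [lowerGamma, intervalIntegral.integral_of_le hx.le,
    setIntegral_congr_fun measurableSet_Ioc hcongr]
  have he : ∀ n : ℕ, (-1:ℝ) < a - 1 + n := fun n => by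
    have : (0:ℝ) ≤ n := Nat.cast_nonneg n
    linarith
  have hs : Summable fun n : ℕ =>
      |((-1:ℝ) ^ n / n.factorial)| * (x ^ (a - 1 + n + 1) / (a - 1 + n + 1)) := by
    refine Summable.of_nonneg_of_le (fun n => ?_) (fun n => ?_)
      ((Real.summable_pow_div_factorial x).mul_left (x ^ a / a))
    · have h1 : (0:ℝ) < a - 1 + n + 1 := by linarith [he n]
      have h2 := Real.rpow_nonneg hx.le (a - 1 + n + 1)
      positivity
    · have hn : (0:ℝ) ≤ n := Nat.cast_nonneg n
      have h1 : (0:ℝ) < a + n := by linarith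
      rw [show a - 1 + (n:ℝ) + 1 = a + n by ring, abs_div, abs_pow, abs_neg, abs_one,
        one_pow, abs_of_pos (show (0:ℝ) < (n.factorial:ℝ) by positivity),
        Real.rpow_add hx, Real.rpow_natCast]
      rw [div_mul_eq_mul_div, one_mul, div_div]
      rw [div_mul_div_comm]
      rw [div_le_div_iff₀ (by positivity) (by positivity)]
      have hxa := Real.rpow_pos_of_pos hx a
      have hxn : (0:ℝ) < x ^ n := pow_pos hx n
      nlinarith [mul_pos hxa hxn, mul_pos (mul_pos hxa hxn) (show (0:ℝ) < (n.factorial:ℝ) by positivity)]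
  rw [integral_tsum_rpow _ _ le_rfl hx.le he hs]
  refine tsum_congr fun n => ?_
  rw [show a - 1 + (n:ℝ) + 1 = a + n by ring,
    Real.zero_rpow (show a + (n:ℝ) ≠ 0 by positivity)]
  ring

theorem stmt_0 (a α b r₀ R : ℝ) (ha : 0 < a) (hα : 0 < α) (hb : 0 < b)
    (hr₀ : 0 ≤ r₀) (hR : r₀ < R) :
    (∀ z : ℝ, Summable fun n : ℕ => |hypTerm a (2 / α) n * z ^ n|) ∧
    (∫ r in r₀..R, lowerGamma a (b * r ^ α) * r) =
      b ^ a / (a * (α * a + 2)) *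
        (R ^ (α * a + 2) * hypF a (2 / α) (-(b * R ^ α)) -
          r₀ ^ (α * a + 2) * hypF a (2 / α) (-(b * r₀ ^ α))) := by
  have hδ : (0:ℝ) < 2 / α := by positivity
  have conj1 : ∀ z : ℝ, Summable fun n : ℕ => |hypTerm a (2 / α) n * z ^ n| :=
    fun z => hypTerm_summable ha hδ z
  refine ⟨conj1, ?_⟩
  have hRpos : 0 < R := lt_of_le_of_lt hr₀ hR
  set K : ℝ := b ^ a / (a * (α * a + 2)) with hK
  set c : ℕ → ℝ := fun n => ((-1:ℝ) ^ n / n.factorial) * (b ^ (a + (n:ℝ)) / (a + n)) with hc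
  set e : ℕ → ℝ := fun n => α * (a + (n:ℝ)) + 1 with hee
  have he : ∀ n, (-1:ℝ) < e n := by
    intro n
    have h1 : (0:ℝ) < α * (a + n) := by positivity
    simp only [hee]
    linarith
  -- the key termwise identity
  have key : ∀ x : ℝ, 0 ≤ x → ∀ n : ℕ,
      c n * (x ^ (e n + 1) / (e n + 1)) =
        K * (x ^ (α * a + 2) * (hypTerm a (2 / α) n * (-(b * x ^ α)) ^ n)) := by
    intro x hx n
    rcases hx.eq_or_lt with h0 | hxpos
    · have h2 : (0:ℝ) < e n + 1 := by linarith [he n]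
      rw [← h0, Real.zero_rpow h2.ne', Real.zero_rpow (show (α * a + 2) ≠ 0 by positivity)]
      simp
    · have hfac : ((n.factorial : ℝ)) ≠ 0 := by positivity
      have han : (0:ℝ) < a + n := by positivity
      have hαan : (0:ℝ) < α * (a + n) + 2 := by positivity
      have hδn : (0:ℝ) < a + 2 / α + n := by positivity
      have hαa2 : (0:ℝ) < α * a + 2 := by positivity
      rw [hypTerm_eq ha hδ, hK]
      simp only [hc, hee]
      rw [show α * (a + (n:ℝ)) + 1 + 1 = α * a + 2 + α * (n:ℝ) by ring,
        Real.rpow_add hxpos (α * a + 2) (α * n), Real.rpow_mul hx α (n:ℝ),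
        Real.rpow_add hb a (n:ℝ),
        show -(b * x ^ α) = (-1) * (b * x ^ α) by ring, mul_pow, mul_pow]
      simp only [Real.rpow_natCast]
      field_simp
  have hs : Summable fun n => |c n| * (R ^ (e n + 1) / (e n + 1)) := by
    refine Summable.congr (((conj1 (-(b * R ^ α))).mul_left
      (K * R ^ (α * a + 2))) ) (fun n => ?_)
    have h2 : (0:ℝ) < e n + 1 := by linarith [he n]
    have h1 : |c n * (R ^ (e n + 1) / (e n + 1))| = |c n| * (R ^ (e n + 1) / (e n + 1)) := by
      rw [abs_mul, abs_of_nonneg (div_nonneg (Real.rpow_nonneg hRpos.le _) h2.le)]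
    have hKpos : 0 < K := by
      rw [hK]
      exact div_pos (Real.rpow_pos_of_pos hb a) (by positivity)
    have hRe : 0 < R ^ (α * a + 2) := Real.rpow_pos_of_pos hRpos _
    have habs : |K * (R ^ (α * a + 2) * (hypTerm a (2 / α) n * (-(b * R ^ α)) ^ n))|
        = K * (R ^ (α * a + 2) * |hypTerm a (2 / α) n * (-(b * R ^ α)) ^ n|) := by
      rw [abs_mul, abs_mul, abs_of_pos hKpos, abs_of_pos hRe]
    rw [← h1, key R hRpos.le n, habs]
    ring
  have hcongr : ∀ r ∈ Set.Ioc r₀ R, lowerGamma a (b * r ^ α) * r = ∑' n : ℕ, c n * r ^ e n := by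
    intro r hr
    have hrpos : 0 < r := lt_of_le_of_lt hr₀ hr.1
    have hbr : 0 < b * r ^ α := by positivity
    rw [lowerGamma_eq_tsum ha hbr, ← tsum_mul_right]
    refine tsum_congr fun n => ?_
    have e1 : (b * r ^ α) ^ (a + (n:ℝ)) = b ^ (a + (n:ℝ)) * r ^ (α * (a + (n:ℝ))) := by
      rw [Real.mul_rpow hb.le (Real.rpow_nonneg hrpos.le α), Real.rpow_mul hrpos.le]
    have e2 : r ^ (e n) = r ^ (α * (a + (n:ℝ))) * r := by
      simp only [hee]
      rw [Real.rpow_add hrpos, Real.rpow_one]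
    rw [e1, e2, hc]
    ring
  rw [intervalIntegral.integral_of_le hR.le, setIntegral_congr_fun measurableSet_Ioc hcongr,
    integral_tsum_rpow c e hr₀ hR.le he hs]
  have hsumR : Summable fun n => K * (R ^ (α * a + 2) * (hypTerm a (2 / α) n * (-(b * R ^ α)) ^ n)) := by
    have := ((conj1 (-(b * R ^ α))).of_abs).mul_left (K * R ^ (α * a + 2))
    exact this.congr (fun n => by ring)
  have hsumr₀ : Summable fun n => K * (r₀ ^ (α * a + 2) * (hypTerm a (2 / α) n * (-(b * r₀ ^ α)) ^ n)) := by
    have := ((conj1 (-(b * r₀ ^ α))).of_abs).mul_left (K * r₀ ^ (α * a + 2))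
    exact this.congr (fun n => by ring)
  have hgR : Summable fun n => c n * (R ^ (e n + 1) / (e n + 1)) :=
    hsumR.congr (fun n => (key R hRpos.le n).symm)
  have hgr₀ : Summable fun n => c n * (r₀ ^ (e n + 1) / (e n + 1)) :=
    hsumr₀.congr (fun n => (key r₀ hr₀ n).symm)
  calc ∑' n : ℕ, c n * ((R ^ (e n + 1) - r₀ ^ (e n + 1)) / (e n + 1))
      = ∑' n : ℕ, (c n * (R ^ (e n + 1) / (e n + 1)) - c n * (r₀ ^ (e n + 1) / (e n + 1))) := by
        refine tsum_congr fun n => ?_; ring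
    _ = (∑' n : ℕ, c n * (R ^ (e n + 1) / (e n + 1))) -
        (∑' n : ℕ, c n * (r₀ ^ (e n + 1) / (e n + 1))) := Summable.tsum_sub hgR hgr₀
    _ = (∑' n : ℕ, K * (R ^ (α * a + 2) * (hypTerm a (2 / α) n * (-(b * R ^ α)) ^ n))) -
        (∑' n : ℕ, K * (r₀ ^ (α * a + 2) * (hypTerm a (2 / α) n * (-(b * r₀ ^ α)) ^ n))) := by
        rw [tsum_congr (fun n => key R hRpos.le n), tsum_congr (fun n => key r₀ hr₀ n)]
    _ = K * (R ^ (α * a + 2) * hypF a (2 / α) (-(b * R ^ α)) -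
          r₀ ^ (α * a + 2) * hypF a (2 / α) (-(b * r₀ ^ α))) := by
        rw [tsum_mul_left, tsum_mul_left, tsum_mul_left, tsum_mul_left, hypF, hypF]
        ring
end

section
/- Let a > 0, α > 0, κ > 0, C > 0 and 0 ≤ r₀ < R be real numbers, and define P(ρ) = C ∫_{r₀}^{R} γ(a, κ ρ^{−1} r^α) · r dr for ρ > 0. Then lim_{ρ → ∞} log P(ρ) / log ρ = −a. Equivalently, the diversity order −lim_{ρ→∞} log P(ρ)/log ρ equals a. (With a = 2 t_s N this is Proposition 1: the diversity order of user m in the proposed MIMO-IRS network is 2 t_s N.) -/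
open MeasureTheory Filter

/-- The outage probability as a function of the transmit SNR `ρ`:
`P(ρ) = C ∫_{r₀}^{R} γ(a, κ ρ⁻¹ r^α) r dr`. -/
noncomputable def outageP (C a κ α r₀ R ρ : ℝ) : ℝ :=
  C * ∫ r in r₀..R, lowerGamma a (κ * ρ⁻¹ * r ^ α) * r

/-!
For `x ∈ [0, 1]` the factor `e^{-t}` in the integrand of `γ(a, x)` lies in `[e^{-1}, 1]`, so
`γ(a, x)` is `x^a / a` up to a factor in `[e^{-1}, 1]`. Once `ρ ≥ κ R^α` every argument
`κ ρ⁻¹ r^α` of `γ` in `P(ρ)` lies in `[0, 1]`, hence `e^{-1} D ρ^{-a} ≤ P(ρ) ≤ D ρ^{-a}` with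
`D = C κ^a / a · ∫_{r₀}^{R} r^{αa+1} dr > 0`. Taking logarithms,
`log P(ρ) / log ρ = -a + O(1 / log ρ)`.
-/

open Real intervalIntegral Topology

lemma tendsto_log_div_log_of_rpow_bounds {f : ℝ → ℝ} {b m M : ℝ} (hm : 0 < m)
    (hlo : ∀ᶠ ρ in atTop, m * ρ ^ b ≤ f ρ) (hhi : ∀ᶠ ρ in atTop, f ρ ≤ M * ρ ^ b) :
    Tendsto (fun ρ => log (f ρ) / log ρ) atTop (𝓝 b) := by
  have hlim : ∀ c : ℝ, Tendsto (fun ρ => log c / log ρ + b) atTop (𝓝 b) := fun c => by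
    simpa [div_eq_mul_inv] using
      (tendsto_log_atTop.inv_tendsto_atTop.const_mul (log c)).add_const b
  have hlog_bound : ∀ c ρ, 0 < c → 1 < ρ → log (c * ρ ^ b) / log ρ = log c / log ρ + b :=
    fun c ρ hc hρ => by
      have hlogρ := log_pos hρ
      rw [log_mul hc.ne' (rpow_pos_of_pos (by linarith) b).ne', log_rpow (by linarith)]
      field_simp
  refine tendsto_of_tendsto_of_tendsto_of_le_of_le' (hlim m) (hlim M) ?_ ?_
  · filter_upwards [hlo, eventually_gt_atTop 1] with ρ hρ hρ1
    have hmρ : 0 < m * ρ ^ b := mul_pos hm (rpow_pos_of_pos (by linarith) b)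
    have hlogρ := log_pos hρ1
    rw [← hlog_bound m ρ hm hρ1]
    gcongr
  · filter_upwards [hlo, hhi, eventually_gt_atTop 1] with ρ hρlo hρhi hρ1
    have hfpos : 0 < f ρ := (mul_pos hm (rpow_pos_of_pos (by linarith) b)).trans_le hρlo
    have hM : 0 < M := pos_of_mul_pos_left (hfpos.trans_le hρhi) (rpow_nonneg (by linarith) b)
    have hlogρ := log_pos hρ1
    rw [← hlog_bound M ρ hM hρ1]
    gcongr

section LowerGamma

variable {a : ℝ}

lemma intervalIntegrable_rpow_mul_exp_neg (ha : 0 < a) (x y : ℝ) :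
    IntervalIntegrable (fun t : ℝ => t ^ (a - 1) * exp (-t)) volume x y :=
  (intervalIntegrable_rpow' (by linarith)).mul_continuousOn (by fun_prop)

lemma integral_rpow_sub_one (ha : 0 < a) (x : ℝ) : ∫ t in (0 : ℝ)..x, t ^ (a - 1) = x ^ a / a := by
  rw [integral_rpow (Or.inl (by linarith)), sub_add_cancel, zero_rpow ha.ne', sub_zero]

lemma continuous_lowerGamma (ha : 0 < a) : Continuous (lowerGamma a) :=
  continuous_primitive (intervalIntegrable_rpow_mul_exp_neg ha) 0

lemma lowerGamma_le_rpow_div (ha : 0 < a) {x : ℝ} (hx : 0 ≤ x) : lowerGamma a x ≤ x ^ a / a := by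
  rw [← integral_rpow_sub_one ha]
  refine integral_mono_on hx (intervalIntegrable_rpow_mul_exp_neg ha 0 x)
    (intervalIntegrable_rpow' (by linarith)) fun t ht => ?_
  have : exp (-t) ≤ 1 := exp_le_one_iff.mpr (by linarith [ht.1])
  exact mul_le_of_le_one_right (rpow_nonneg ht.1 _) this

lemma exp_neg_mul_rpow_div_le_lowerGamma (ha : 0 < a) {x : ℝ} (hx : 0 ≤ x) :
    exp (-x) * (x ^ a / a) ≤ lowerGamma a x := by
  rw [← integral_rpow_sub_one ha, ← intervalIntegral.integral_const_mul]
  refine integral_mono_on hx ((intervalIntegrable_rpow' (by linarith)).const_mul _)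
    (intervalIntegrable_rpow_mul_exp_neg ha 0 x) fun t ht => ?_
  rw [mul_comm]
  exact mul_le_mul_of_nonneg_left (exp_le_exp.mpr (by linarith [ht.2])) (rpow_nonneg ht.1 _)

end LowerGamma

section OutageIntegral

variable {a α c r₀ R : ℝ}

lemma mul_rpow_rpow_eq {r : ℝ} (hc : 0 ≤ c) (hr : 0 ≤ r) :
    (c * r ^ α) ^ a = c ^ a * r ^ (α * a) := by
  rw [mul_rpow hc (rpow_nonneg hr _), ← rpow_mul hr]

lemma intervalIntegrable_lowerGamma_mul (ha : 0 < a) (hα : 0 < α) :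
    IntervalIntegrable (fun r => lowerGamma a (c * r ^ α) * r) volume r₀ R :=
  (((continuous_lowerGamma ha).comp
    (continuous_const.mul (continuous_rpow_const hα.le))).mul continuous_id).intervalIntegrable _ _

lemma intervalIntegrable_rpow_mul_self (ha : 0 < a) (hα : 0 < α) :
    IntervalIntegrable (fun r : ℝ => r ^ (α * a) * r) volume r₀ R :=
  ((continuous_rpow_const (by positivity)).mul continuous_id).intervalIntegrable _ _

lemma integral_rpow_mul_self_pos (hr₀ : 0 ≤ r₀) (hR : r₀ < R) (ha : 0 < a) (hα : 0 < α) :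
    0 < ∫ r in r₀..R, r ^ (α * a) * r :=
  intervalIntegral_pos_of_pos_on (intervalIntegrable_rpow_mul_self ha hα)
    (fun r hr => have hr0 : 0 < r := hr₀.trans_lt hr.1; mul_pos (rpow_pos_of_pos hr0 _) hr0) hR

lemma integral_lowerGamma_mul_le (ha : 0 < a) (hα : 0 < α) (hc : 0 ≤ c) (hr₀ : 0 ≤ r₀)
    (hR : r₀ ≤ R) :
    ∫ r in r₀..R, lowerGamma a (c * r ^ α) * r ≤ c ^ a / a * ∫ r in r₀..R, r ^ (α * a) * r := by
  rw [← intervalIntegral.integral_const_mul]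
  refine integral_mono_on hR (intervalIntegrable_lowerGamma_mul ha hα)
    ((intervalIntegrable_rpow_mul_self ha hα).const_mul _) fun r hr => ?_
  have hr0 : 0 ≤ r := hr₀.trans hr.1
  calc lowerGamma a (c * r ^ α) * r ≤ (c * r ^ α) ^ a / a * r :=
        mul_le_mul_of_nonneg_right (lowerGamma_le_rpow_div ha (by positivity)) hr0
    _ = c ^ a / a * (r ^ (α * a) * r) := by rw [mul_rpow_rpow_eq hc hr0]; ring

lemma exp_neg_one_mul_le_integral_lowerGamma_mul (ha : 0 < a) (hα : 0 < α) (hc : 0 ≤ c)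
    (hr₀ : 0 ≤ r₀) (hR : r₀ ≤ R) (hcR : c * R ^ α ≤ 1) :
    exp (-1) * (c ^ a / a * ∫ r in r₀..R, r ^ (α * a) * r)
      ≤ ∫ r in r₀..R, lowerGamma a (c * r ^ α) * r := by
  rw [← intervalIntegral.integral_const_mul, ← intervalIntegral.integral_const_mul]
  refine integral_mono_on hR (((intervalIntegrable_rpow_mul_self ha hα).const_mul _).const_mul _)
    (intervalIntegrable_lowerGamma_mul ha hα) fun r hr => ?_
  have hr0 : 0 ≤ r := hr₀.trans hr.1
  have hx1 : c * r ^ α ≤ 1 :=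
    (mul_le_mul_of_nonneg_left (rpow_le_rpow hr0 hr.2 hα.le) hc).trans hcR
  have hexp : exp (-1) ≤ exp (-(c * r ^ α)) := exp_le_exp.mpr (by linarith)
  calc exp (-1) * (c ^ a / a * (r ^ (α * a) * r))
      = exp (-1) * ((c * r ^ α) ^ a / a) * r := by rw [mul_rpow_rpow_eq hc hr0]; ring
    _ ≤ exp (-(c * r ^ α)) * ((c * r ^ α) ^ a / a) * r := by gcongr
    _ ≤ lowerGamma a (c * r ^ α) * r :=
        mul_le_mul_of_nonneg_right (exp_neg_mul_rpow_div_le_lowerGamma ha (by positivity)) hr0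

end OutageIntegral

lemma mul_inv_rpow_eq {a κ ρ : ℝ} (hκ : 0 ≤ κ) (hρ : 0 < ρ) :
    (κ * ρ⁻¹) ^ a = κ ^ a * ρ ^ (-a) := by
  rw [mul_rpow hκ (inv_nonneg.mpr hρ.le), inv_rpow hρ.le, ← rpow_neg hρ.le]

theorem stmt_3 (a α κ C r₀ R : ℝ) (ha : 0 < a) (hα : 0 < α) (hκ : 0 < κ) (hC : 0 < C)
    (hr₀ : 0 ≤ r₀) (hR : r₀ < R) :
    Tendsto (fun ρ : ℝ => Real.log (outageP C a κ α r₀ R ρ) / Real.log ρ)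
      atTop (nhds (-a)) := by
  set D := C * (κ ^ a / a * ∫ r in r₀..R, r ^ (α * a) * r)
  have hD : 0 < D := by
    have hJ := integral_rpow_mul_self_pos hr₀ hR ha hα
    have hκa := rpow_pos_of_pos hκ a
    positivity
  have hD_eq : ∀ ρ, 0 < ρ →
      C * ((κ * ρ⁻¹) ^ a / a * ∫ r in r₀..R, r ^ (α * a) * r) = D * ρ ^ (-a) := fun ρ hρ => by
    rw [mul_inv_rpow_eq hκ.le hρ]; ring
  have hρ_large : ∀ᶠ ρ in atTop, 0 < ρ ∧ κ * ρ⁻¹ * R ^ α ≤ 1 := by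
    filter_upwards [eventually_gt_atTop 0, eventually_ge_atTop (κ * R ^ α)] with ρ hρ hρR
    refine ⟨hρ, ?_⟩
    rw [mul_right_comm, ← div_eq_mul_inv]
    exact div_le_one_of_le₀ hρR hρ.le
  refine tendsto_log_div_log_of_rpow_bounds (M := D) (mul_pos (exp_pos (-1)) hD) ?_ ?_
  · filter_upwards [hρ_large] with ρ ⟨hρ, hsmall⟩
    rw [outageP, mul_assoc, ← hD_eq ρ hρ, mul_left_comm]
    exact mul_le_mul_of_nonneg_left (exp_neg_one_mul_le_integral_lowerGamma_mul ha hα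
      (by positivity) hr₀ hR.le hsmall) hC.le
  · filter_upwards [hρ_large] with ρ ⟨hρ, _⟩
    rw [outageP, ← hD_eq ρ hρ]
    exact mul_le_mul_of_nonneg_left
      (integral_lowerGamma_mul_le ha hα (by positivity) hr₀ hR.le) hC.le
end

section
/- Let N be a positive integer and let d > 0, α > 0, R > 0 be real numbers. Then lim_{ε → 0⁺} ε^{−N} · (2 / (R² Γ(N))) ∫₀^{R} γ(N, ε d^α r^α) · r dr = 2 (dR)^{Nα} / ((Nα + 2) · N!). (This is Corollary 2: for M = K = t₂ = 1 and t₁ → ∞, the leading high-SNR term of the outage probability is P̄_{m,0} = 2 ε_m^N (d₁R)^{Nα} / ((Nα+2) N!), exhibiting diversity order N.) -/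
open MeasureTheory Filter

private lemma cont_rpow {q : ℝ} (hq : 0 ≤ q) : Continuous fun t : ℝ => t ^ q :=
  continuous_iff_continuousAt.mpr fun x => Real.continuousAt_rpow_const x q (Or.inr hq)

private lemma int_rpow {N : ℕ} (hN : 0 < N) (x : ℝ) :
    ∫ t in (0:ℝ)..x, t ^ ((N:ℝ) - 1) = x ^ N / N := by
  have hN1 : (1:ℝ) ≤ N := by exact_mod_cast hN
  rw [integral_rpow (Or.inl (by linarith))]
  have : (N:ℝ) - 1 + 1 = N := by ring
  rw [this, Real.zero_rpow (by exact_mod_cast hN.ne'), Real.rpow_natCast]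
  ring

private lemma lg_le {N : ℕ} (hN : 0 < N) {x : ℝ} (hx : 0 ≤ x) :
    lowerGamma N x ≤ x ^ N / N := by
  have hN1 : (1:ℝ) ≤ N := by exact_mod_cast hN
  have hq : (0:ℝ) ≤ (N:ℝ) - 1 := by linarith
  have hcont : Continuous fun t : ℝ => t ^ ((N:ℝ) - 1) := cont_rpow hq
  have h1 : lowerGamma N x ≤ ∫ t in (0:ℝ)..x, t ^ ((N:ℝ) - 1) := by
    unfold lowerGamma
    apply intervalIntegral.integral_mono_on hx
    · exact (hcont.mul (Real.continuous_exp.comp continuous_neg)).intervalIntegrable _ _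
    · exact hcont.intervalIntegrable _ _
    · intro t ht
      have h2 : Real.exp (-t) ≤ 1 := Real.exp_le_one_iff.mpr (by linarith [ht.1])
      calc t ^ ((N:ℝ) - 1) * Real.exp (-t) ≤ t ^ ((N:ℝ) - 1) * 1 :=
            mul_le_mul_of_nonneg_left h2 (Real.rpow_nonneg ht.1 _)
        _ = t ^ ((N:ℝ) - 1) := mul_one _
  calc lowerGamma N x ≤ ∫ t in (0:ℝ)..x, t ^ ((N:ℝ) - 1) := h1
    _ = x ^ N / N := int_rpow hN x

private lemma le_lg {N : ℕ} (hN : 0 < N) {x y : ℝ} (hx : 0 ≤ x) (hxy : x ≤ y) :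
    Real.exp (-y) * (x ^ N / N) ≤ lowerGamma N x := by
  have hN1 : (1:ℝ) ≤ N := by exact_mod_cast hN
  have hq : (0:ℝ) ≤ (N:ℝ) - 1 := by linarith
  have hcont : Continuous fun t : ℝ => t ^ ((N:ℝ) - 1) := cont_rpow hq
  have h1 : (∫ t in (0:ℝ)..x, Real.exp (-y) * t ^ ((N:ℝ) - 1)) ≤ lowerGamma N x := by
    unfold lowerGamma
    apply intervalIntegral.integral_mono_on hx
    · exact (continuous_const.mul hcont).intervalIntegrable _ _
    · exact (hcont.mul (Real.continuous_exp.comp continuous_neg)).intervalIntegrable _ _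
    · intro t ht
      have h2 : Real.exp (-y) ≤ Real.exp (-t) := Real.exp_le_exp.mpr (by linarith [ht.2])
      calc Real.exp (-y) * t ^ ((N:ℝ) - 1) ≤ Real.exp (-t) * t ^ ((N:ℝ) - 1) :=
            mul_le_mul_of_nonneg_right h2 (Real.rpow_nonneg ht.1 _)
        _ = t ^ ((N:ℝ) - 1) * Real.exp (-t) := mul_comm _ _
  calc Real.exp (-y) * (x ^ N / N)
      = ∫ t in (0:ℝ)..x, Real.exp (-y) * t ^ ((N:ℝ) - 1) := by
        rw [intervalIntegral.integral_const_mul, int_rpow hN]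
    _ ≤ lowerGamma N x := h1

theorem stmt_4 (N : ℕ) (hN : 0 < N) (d α R : ℝ) (hd : 0 < d) (hα : 0 < α) (hR : 0 < R) :
    Tendsto
      (fun ε : ℝ => ε ^ (-(N : ℝ)) * (2 / (R ^ 2 * Real.Gamma N)) *
        ∫ r in (0:ℝ)..R, lowerGamma N (ε * d ^ α * r ^ α) * r)
      (nhdsWithin 0 (Set.Ioi 0))
      (nhds (2 * (d * R) ^ ((N : ℝ) * α) / (((N : ℝ) * α + 2) * N.factorial))) := by
  have hN0 : (0:ℝ) < N := by exact_mod_cast hN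
  set c : ℝ := d ^ α with hc
  have hc0 : 0 < c := Real.rpow_pos_of_pos hd α
  set q : ℝ := α * N + 1 with hqdef
  have hq0 : 0 < α * N := by positivity
  have hΓ : 0 < Real.Gamma N := Real.Gamma_pos_of_pos hN0
  set K : ℝ := 2 / (R ^ 2 * Real.Gamma N) with hK
  have hK0 : 0 < K := by positivity
  set C : ℝ := c ^ N * R ^ (α * N + 2) / (N * (α * N + 2)) with hCdef
  have hRp : 0 < R ^ (α * N + 2) := Real.rpow_pos_of_pos hR _
  have hC0 : 0 < C := by positivity
  -- key pointwise identity
  have key : ∀ r : ℝ, 0 ≤ r → ((r ^ α) ^ N) * r = r ^ q := by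
    intro r hr
    rcases eq_or_lt_of_le hr with h | h
    · rw [← h, Real.zero_rpow hα.ne', zero_pow hN.ne', zero_mul,
        Real.zero_rpow (by positivity)]
    · rw [← Real.rpow_natCast (r ^ α) N, ← Real.rpow_mul hr,
        hqdef, Real.rpow_add h, Real.rpow_one]
  -- continuity of the integrand
  have hgc : Continuous fun t : ℝ => t ^ ((N:ℝ) - 1) * Real.exp (-t) :=
    (cont_rpow (by simp; exact_mod_cast hN)).mul (Real.continuous_exp.comp continuous_neg)
  have hlgc : Continuous (lowerGamma N) := by
    unfold lowerGamma
    exact intervalIntegral.continuous_primitive (fun a b => hgc.intervalIntegrable a b) 0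
  have hrpowc : Continuous fun r : ℝ => r ^ α := cont_rpow hα.le
  have hqc : Continuous fun r : ℝ => r ^ q := cont_rpow (by positivity)
  -- the bound integral
  have hint : ∀ A : ℝ, (∫ r in (0:ℝ)..R, A * r ^ q) = A * (R ^ (α * N + 2) / (α * N + 2)) := by
    intro A
    have hq1 : (0:ℝ) < q := by rw [hqdef]; positivity
    rw [intervalIntegral.integral_const_mul,
      integral_rpow (Or.inl (by linarith)),
      Real.zero_rpow (by positivity : (0:ℝ) < q + 1).ne']
    have : q + 1 = α * N + 2 := by rw [hqdef]; ring
    rw [this]; ring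
  -- bounds for the integral F(ε)
  have hbound : ∀ ε : ℝ, 0 < ε →
      Real.exp (-(ε * c * R ^ α)) * (ε ^ N * C) ≤
        (∫ r in (0:ℝ)..R, lowerGamma N (ε * c * r ^ α) * r) ∧
      (∫ r in (0:ℝ)..R, lowerGamma N (ε * c * r ^ α) * r) ≤ ε ^ N * C := by
    intro ε hε
    have hfc : Continuous fun r : ℝ => lowerGamma N (ε * c * r ^ α) * r :=
      (hlgc.comp (continuous_const.mul hrpowc)).mul continuous_id
    have hxnn : ∀ r : ℝ, 0 ≤ r → 0 ≤ ε * c * r ^ α := fun r hr => by positivity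
    have hform : ∀ r : ℝ, 0 ≤ r → (ε * c * r ^ α) ^ N / N * r = ε ^ N * c ^ N / N * r ^ q := by
      intro r hr
      rw [mul_pow, mul_pow, ← key r hr]; ring
    constructor
    · have hlow : ∀ r ∈ Set.Icc (0:ℝ) R,
          Real.exp (-(ε * c * R ^ α)) * (ε ^ N * c ^ N / N) * r ^ q ≤
            lowerGamma N (ε * c * r ^ α) * r := by
        intro r hr
        have hxy : ε * c * r ^ α ≤ ε * c * R ^ α := by
          have h := Real.rpow_le_rpow hr.1 hr.2 hα.le
          exact mul_le_mul_of_nonneg_left h (by positivity)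
        have h1 := le_lg hN (hxnn r hr.1) hxy
        have h2 : Real.exp (-(ε * c * R ^ α)) * ((ε * c * r ^ α) ^ N / N) * r ≤
            lowerGamma N (ε * c * r ^ α) * r := mul_le_mul_of_nonneg_right h1 hr.1
        calc Real.exp (-(ε * c * R ^ α)) * (ε ^ N * c ^ N / N) * r ^ q
            = Real.exp (-(ε * c * R ^ α)) * ((ε * c * r ^ α) ^ N / N) * r := by
              rw [mul_assoc, ← hform r hr.1]; ring
          _ ≤ _ := h2
      have := intervalIntegral.integral_mono_on (μ := volume) hR.le
        ((continuous_const.mul hqc).intervalIntegrable 0 R)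
        (hfc.intervalIntegrable 0 R) hlow
      calc Real.exp (-(ε * c * R ^ α)) * (ε ^ N * C)
          = Real.exp (-(ε * c * R ^ α)) * (ε ^ N * c ^ N / N) *
            (R ^ (α * N + 2) / (α * N + 2)) := by
            rw [hCdef]; field_simp
        _ = ∫ r in (0:ℝ)..R, Real.exp (-(ε * c * R ^ α)) * (ε ^ N * c ^ N / N) * r ^ q := by
            rw [hint]
        _ ≤ _ := this
    · have hup : ∀ r ∈ Set.Icc (0:ℝ) R,
          lowerGamma N (ε * c * r ^ α) * r ≤ ε ^ N * c ^ N / N * r ^ q := by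
        intro r hr
        have h1 := lg_le hN (hxnn r hr.1)
        calc lowerGamma N (ε * c * r ^ α) * r ≤ (ε * c * r ^ α) ^ N / N * r :=
              mul_le_mul_of_nonneg_right h1 hr.1
          _ = ε ^ N * c ^ N / N * r ^ q := hform r hr.1
      have := intervalIntegral.integral_mono_on (μ := volume) hR.le
        (hfc.intervalIntegrable 0 R)
        ((continuous_const.mul hqc).intervalIntegrable 0 R) hup
      calc (∫ r in (0:ℝ)..R, lowerGamma N (ε * c * r ^ α) * r)
          ≤ ∫ r in (0:ℝ)..R, ε ^ N * c ^ N / N * r ^ q := this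
        _ = ε ^ N * C := by rw [hint, hCdef]; field_simp
  -- identify the limit value
  have hKC : K * C = 2 * (d * R) ^ ((N : ℝ) * α) / (((N : ℝ) * α + 2) * N.factorial) := by
    obtain ⟨n, rfl⟩ : ∃ n, N = n + 1 := ⟨N - 1, (Nat.succ_pred_eq_of_pos hN).symm⟩
    have hΓeq : Real.Gamma (n + 1 : ℕ) = n.factorial := by
      rw [Nat.cast_add, Nat.cast_one, Real.Gamma_nat_eq_factorial]
    have hfac : ((n + 1).factorial : ℝ) = (n + 1) * n.factorial := by
      rw [Nat.factorial_succ]; push_cast; ring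
    have hcN : c ^ (n + 1) = d ^ (α * (n + 1 : ℕ)) := by
      rw [hc, ← Real.rpow_natCast (d ^ α) (n + 1), ← Real.rpow_mul hd.le]
    have hRsplit : R ^ (α * (n + 1 : ℕ) + 2) = R ^ (α * (n + 1 : ℕ)) * R ^ 2 := by
      rw [Real.rpow_add hR]
      norm_num [Real.rpow_two]
    have hdR : (d * R) ^ (((n + 1 : ℕ) : ℝ) * α) =
        d ^ (α * (n + 1 : ℕ)) * R ^ (α * (n + 1 : ℕ)) := by
      rw [Real.mul_rpow hd.le hR.le, mul_comm ((n + 1 : ℕ) : ℝ) α]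
    rw [hK, hCdef, hΓeq, hdR, hcN, hRsplit, hfac]
    have h1 : ((n:ℝ) + 1) ≠ 0 := by positivity
    have h2 : (n.factorial : ℝ) ≠ 0 := by positivity
    have h3 : α * ((n + 1 : ℕ) : ℝ) + 2 ≠ 0 := by positivity
    have h4 : ((n + 1 : ℕ) : ℝ) = (n : ℝ) + 1 := by push_cast; ring
    rw [h4] at *
    field_simp
  -- squeeze
  have hlimlow : Tendsto (fun ε : ℝ => Real.exp (-(ε * c * R ^ α)) * (K * C))
      (nhdsWithin 0 (Set.Ioi 0)) (nhds (K * C)) := by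
    have hcont : Continuous fun ε : ℝ => Real.exp (-(ε * c * R ^ α)) * (K * C) := by
      continuity
    have := (hcont.tendsto 0).mono_left (nhdsWithin_le_nhds (s := Set.Ioi 0))
    simpa using this
  rw [show (2 * (d * R) ^ ((N : ℝ) * α) / (((N : ℝ) * α + 2) * N.factorial)) = K * C from
    hKC.symm]
  apply tendsto_of_tendsto_of_tendsto_of_le_of_le' hlimlow tendsto_const_nhds
  · filter_upwards [self_mem_nhdsWithin] with ε (hε : 0 < ε)
    have hεN : (0:ℝ) < ε ^ N := by positivity
    have hrpow : ε ^ (-(N:ℝ)) = (ε ^ N)⁻¹ := by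
      rw [Real.rpow_neg hε.le, Real.rpow_natCast]
    rw [hrpow]
    have := (hbound ε hε).1
    calc Real.exp (-(ε * c * R ^ α)) * (K * C)
        = (ε ^ N)⁻¹ * K * (Real.exp (-(ε * c * R ^ α)) * (ε ^ N * C)) := by
          field_simp
      _ ≤ (ε ^ N)⁻¹ * K * ∫ r in (0:ℝ)..R, lowerGamma N (ε * c * r ^ α) * r := by
          apply mul_le_mul_of_nonneg_left this (by positivity)
  · filter_upwards [self_mem_nhdsWithin] with ε (hε : 0 < ε)
    have hεN : (0:ℝ) < ε ^ N := by positivity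
    have hrpow : ε ^ (-(N:ℝ)) = (ε ^ N)⁻¹ := by
      rw [Real.rpow_neg hε.le, Real.rpow_natCast]
    rw [hrpow]
    have := (hbound ε hε).2
    calc (ε ^ N)⁻¹ * K * ∫ r in (0:ℝ)..R, lowerGamma N (ε * c * r ^ α) * r
        ≤ (ε ^ N)⁻¹ * K * (ε ^ N * C) := mul_le_mul_of_nonneg_left this (by positivity)
      _ = K * C := by field_simp
end

section
/- Let t₁ > 0, t₂ > 0 and let N, Q be positive integers. On a probability space, let {G_{n,k} : 1 ≤ n ≤ N, 1 ≤ k ≤ Q} and {H_n : 1 ≤ n ≤ N} be mutually independent random variables, each G_{n,k} following the Gamma distribution with shape t₂ and rate t₂, and each H_n following the Gamma distribution with shape t₁ and rate t₁. Define S = ∑_{n=1}^{N} ( ∑_{k=1}^{Q} G_{n,k} ) · H_n. Then E[S] = NQ and Var[S] = NQ · (1 + t₁ + Q t₂)/(t₁ t₂). (This is Lemma 2: the effective channel gain of the m-th user has the same mean NQ and variance NQ·t_h, with t_h = (1+t₁+Qt₂)/(t₁t₂), as the Gamma distribution Γ(NQ/t_h, t_h) used as its approximation.) -/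
/-!
Multiplying the Gamma(a, r) density by `x` gives `a / r` times the Gamma(a + 1, r) density, so a
Gamma(a, r) variable has mean `a / r` and second moment `a (a + 1) / r²`. For independent `X, Y`,
`E[(XY)²] = E[X²] E[Y²]`, whence `Var(XY) = Var X Var Y + Var X (E Y)² + (E X)² Var Y`; with
`X = ∑_k G_{n,k}` (mean `Q`, variance `Q / t₂`) and `Y = H_n` (mean `1`, variance `1 / t₁`) this is
`Q (1 + t₁ + Q t₂) / (t₁ t₂)`. The branches `n` are functions of disjoint blocks of the independent
family, so they are pairwise independent and their means and variances add up.
-/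

open MeasureTheory ProbabilityTheory

namespace ProbabilityTheory

section GammaMoments

variable {a r : ℝ}

lemma id_mul_gammaPDFReal (ha : 0 < a) (hr : 0 < r) (x : ℝ) :
    x * gammaPDFReal a r x = a / r * gammaPDFReal (a + 1) r x := by
  unfold gammaPDFReal
  split_ifs with hx
  · rcases hx.eq_or_lt with rfl | hx
    · simp [Real.zero_rpow ha.ne']
    · rw [add_sub_cancel_right, Real.Gamma_add_one ha.ne', Real.rpow_add_one hr.ne',
        Real.rpow_sub_one hx.ne']
      have := (Real.Gamma_pos_of_pos ha).ne'
      field_simp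
  · simp

lemma integral_gammaMeasure (ha : 0 < a) (hr : 0 < r) (g : ℝ → ℝ) :
    ∫ x, g x ∂gammaMeasure a r = ∫ x, gammaPDFReal a r x * g x := by
  rw [gammaMeasure, integral_withDensity_eq_integral_toReal_smul (f := gammaPDF a r)
    (measurable_gammaPDFReal a r).ennreal_ofReal (ae_of_all _ fun _ => ENNReal.ofReal_lt_top)]
  simp_rw [gammaPDF, ENNReal.toReal_ofReal (gammaPDFReal_nonneg ha hr _), smul_eq_mul]

lemma integrable_gammaMeasure_iff (ha : 0 < a) (hr : 0 < r) {g : ℝ → ℝ} :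
    Integrable g (gammaMeasure a r) ↔ Integrable (fun x => gammaPDFReal a r x * g x) := by
  rw [gammaMeasure, integrable_withDensity_iff_integrable_smul' (f := gammaPDF a r)
    (measurable_gammaPDFReal a r).ennreal_ofReal (ae_of_all _ fun _ => ENNReal.ofReal_lt_top)]
  simp_rw [gammaPDF, ENNReal.toReal_ofReal (gammaPDFReal_nonneg ha hr _), smul_eq_mul]

lemma gammaPDFReal_mul_id_mul (ha : 0 < a) (hr : 0 < r) (g : ℝ → ℝ) (x : ℝ) :
    gammaPDFReal a r x * (x * g x) = a / r * (gammaPDFReal (a + 1) r x * g x) := by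
  rw [← mul_assoc, mul_comm (gammaPDFReal a r x), id_mul_gammaPDFReal ha hr, mul_assoc]

lemma integral_id_mul_gammaMeasure (ha : 0 < a) (hr : 0 < r) (g : ℝ → ℝ) :
    ∫ x, x * g x ∂gammaMeasure a r = a / r * ∫ x, g x ∂gammaMeasure (a + 1) r := by
  simp_rw [integral_gammaMeasure ha hr, integral_gammaMeasure (add_pos ha one_pos) hr,
    gammaPDFReal_mul_id_mul ha hr, integral_const_mul]

lemma integrable_id_mul_gammaMeasure_iff (ha : 0 < a) (hr : 0 < r) {g : ℝ → ℝ} :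
    Integrable (fun x => x * g x) (gammaMeasure a r) ↔ Integrable g (gammaMeasure (a + 1) r) := by
  simp_rw [integrable_gammaMeasure_iff ha hr, integrable_gammaMeasure_iff (add_pos ha one_pos) hr,
    gammaPDFReal_mul_id_mul ha hr]
  exact integrable_const_mul_iff (isUnit_iff_ne_zero.2 (div_pos ha hr).ne') _

lemma integral_id_gammaMeasure (ha : 0 < a) (hr : 0 < r) : ∫ x, x ∂gammaMeasure a r = a / r := by
  have := isProbabilityMeasure_gammaMeasure (add_pos ha one_pos) hr
  simpa using integral_id_mul_gammaMeasure ha hr 1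

lemma memLp_id_gammaMeasure (ha : 0 < a) (hr : 0 < r) : MemLp id 2 (gammaMeasure a r) := by
  have := isProbabilityMeasure_gammaMeasure (add_pos (add_pos ha one_pos) one_pos) hr
  rw [memLp_two_iff_integrable_sq aestronglyMeasurable_id]
  simp_rw [id, sq, integrable_id_mul_gammaMeasure_iff ha hr]
  simpa using (integrable_id_mul_gammaMeasure_iff (add_pos ha one_pos) hr).2 (integrable_const 1)

lemma variance_id_gammaMeasure (ha : 0 < a) (hr : 0 < r) :
    Var[id; gammaMeasure a r] = a / r ^ 2 := by
  have := isProbabilityMeasure_gammaMeasure ha hr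
  rw [variance_eq_sub (memLp_id_gammaMeasure ha hr)]
  simp_rw [Pi.pow_apply, id, sq, integral_id_mul_gammaMeasure ha hr,
    integral_id_gammaMeasure (add_pos ha one_pos) hr, integral_id_gammaMeasure ha hr]
  field_simp
  ring

end GammaMoments

variable {Ω : Type*} {mΩ : MeasurableSpace Ω} {μ : Measure Ω}

lemma HasLaw.memLp {X : Ω → ℝ} {ν : Measure ℝ} {p : ENNReal} (hX : HasLaw X ν μ)
    (h : MemLp id p ν) : MemLp X p μ := by
  rw [← hX.map_eq] at h
  exact (memLp_map_measure_iff aestronglyMeasurable_id hX.aemeasurable).1 h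

section GammaLaw

variable {X : Ω → ℝ} {a r : ℝ}

lemma HasLaw.memLp_two_of_gammaMeasure (hX : HasLaw X (gammaMeasure a r) μ) (ha : 0 < a)
    (hr : 0 < r) : MemLp X 2 μ :=
  hX.memLp (memLp_id_gammaMeasure ha hr)

lemma HasLaw.integral_eq_of_gammaMeasure (hX : HasLaw X (gammaMeasure a r) μ) (ha : 0 < a)
    (hr : 0 < r) : μ[X] = a / r :=
  hX.integral_eq.trans (integral_id_gammaMeasure ha hr)

lemma HasLaw.variance_eq_of_gammaMeasure (hX : HasLaw X (gammaMeasure a r) μ) (ha : 0 < a)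
    (hr : 0 < r) : Var[X; μ] = a / r ^ 2 :=
  hX.variance_eq.trans (variance_id_gammaMeasure ha hr)

end GammaLaw

lemma IndepFun.variance_fun_sum {ι : Type*} {X : ι → Ω → ℝ} {s : Finset ι}
    (hs : ∀ i ∈ s, MemLp (X i) 2 μ) (h : Set.Pairwise ↑s fun i j => IndepFun (X i) (X j) μ) :
    Var[fun ω => ∑ i ∈ s, X i ω; μ] = ∑ i ∈ s, Var[X i; μ] := by
  rw [← IndepFun.variance_sum hs h, Finset.sum_fn]

lemma IndepFun.memLp_two_mul {X Y : Ω → ℝ} (h : IndepFun X Y μ) (hX : MemLp X 2 μ)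
    (hY : MemLp Y 2 μ) : MemLp (fun ω => X ω * Y ω) 2 μ := by
  refine (memLp_two_iff_integrable_sq (hX.1.mul hY.1)).2 ?_
  simp only [Pi.mul_apply, mul_pow]
  exact (h.comp (measurable_id.pow_const 2) (measurable_id.pow_const 2)).integrable_mul
    hX.integrable_sq hY.integrable_sq

section IndependentBlocks

variable {ι β : Type*} [mβ : MeasurableSpace β]

lemma measurable_iSup_comap (f : ι → Ω → β) {S : Set ι} {i : ι} (hi : i ∈ S) :
    Measurable[⨆ j ∈ S, mβ.comap (f j)] (f i) :=
  (comap_measurable (f i)).mono (le_iSup₂ (f := fun j _ => mβ.comap (f j)) i hi) le_rfl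

lemma iIndepFun.indepFun_of_measurable_iSup {f : ι → Ω → β} (h : iIndepFun f μ)
    (hf : ∀ i, Measurable (f i)) {S T : Set ι} (hST : Disjoint S T) {γ δ : Type*}
    [MeasurableSpace γ] [MeasurableSpace δ] {X : Ω → γ} {Y : Ω → δ}
    (hX : Measurable[⨆ i ∈ S, mβ.comap (f i)] X) (hY : Measurable[⨆ i ∈ T, mβ.comap (f i)] Y) :
    IndepFun X Y μ := by
  rw [IndepFun_iff_Indep]
  have := indep_iSup_of_disjoint (fun i => (hf i).comap_le) h.iIndep hST
  exact indep_of_indep_of_le_right (indep_of_indep_of_le_left this hX.comap_le) hY.comap_le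

variable {κ : Type*} [Fintype κ] {G : ι → κ → Ω → ℝ} {H : ι → Ω → ℝ}

lemma iIndepFun.indepFun_sum_of_sumElim
    (h : iIndepFun (Sum.elim (fun p : ι × κ => G p.1 p.2) H) μ)
    (hG : ∀ n k, Measurable (G n k)) (hH : ∀ n, Measurable (H n)) (n : ι) :
    IndepFun (fun ω => ∑ k, G n k ω) (H n) μ :=
  h.indepFun_of_measurable_iSup (Sum.rec (fun p => hG p.1 p.2) hH)
    Set.isCompl_range_inl_range_inr.disjoint
    (Finset.measurable_sum _ fun k _ =>
      measurable_iSup_comap _ (S := Set.range Sum.inl) ⟨(n, k), rfl⟩)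
    (measurable_iSup_comap _ (S := Set.range Sum.inr) ⟨n, rfl⟩)

lemma iIndepFun.indepFun_sum_mul_of_sumElim
    (h : iIndepFun (Sum.elim (fun p : ι × κ => G p.1 p.2) H) μ)
    (hG : ∀ n k, Measurable (G n k)) (hH : ∀ n, Measurable (H n)) {n m : ι} (hnm : n ≠ m) :
    IndepFun (fun ω => (∑ k, G n k ω) * H n ω) (fun ω => (∑ k, G m k ω) * H m ω) μ := by
  let block : ι × κ ⊕ ι → ι := Sum.elim Prod.fst id
  have hblock n : Measurable[⨆ i ∈ block ⁻¹' {n},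
      MeasurableSpace.comap (Sum.elim (fun p : ι × κ => G p.1 p.2) H i) inferInstance]
      (fun ω => (∑ k, G n k ω) * H n ω) :=
    (Finset.measurable_sum _ fun k _ =>
      measurable_iSup_comap _ (S := block ⁻¹' {n}) (i := .inl (n, k)) rfl).mul
      (measurable_iSup_comap _ (S := block ⁻¹' {n}) (i := .inr n) rfl)
  exact h.indepFun_of_measurable_iSup (Sum.rec (fun p => hG p.1 p.2) hH)
    ((Set.disjoint_singleton.2 hnm).preimage _) (hblock n) (hblock m)

end IndependentBlocks

variable [IsProbabilityMeasure μ]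

lemma IndepFun.variance_mul {X Y : Ω → ℝ} (h : IndepFun X Y μ) (hX : MemLp X 2 μ)
    (hY : MemLp Y 2 μ) :
    Var[fun ω => X ω * Y ω; μ] =
      Var[X; μ] * Var[Y; μ] + Var[X; μ] * μ[Y] ^ 2 + μ[X] ^ 2 * Var[Y; μ] := by
  have hsq : μ[fun ω => (X ω * Y ω) ^ 2] = μ[X ^ 2] * μ[Y ^ 2] := by
    simp_rw [mul_pow]
    exact (h.comp (measurable_id.pow_const 2) (measurable_id.pow_const 2))
      |>.integral_fun_mul_eq_mul_integral (hX.1.pow 2) (hY.1.pow 2)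
  rw [variance_eq_sub (h.memLp_two_mul hX hY), variance_eq_sub hX, variance_eq_sub hY]
  simp only [Pi.pow_apply] at hsq ⊢
  rw [hsq, h.integral_fun_mul_eq_mul_integral hX.1 hY.1]
  ring

section GammaBranch

variable {κ : Type*} [Fintype κ] {G : κ → Ω → ℝ} {H : Ω → ℝ} {t₁ t₂ : ℝ}

lemma sum_mul_moments_of_hasLaw_gammaMeasure (ht₁ : 0 < t₁) (ht₂ : 0 < t₂)
    (hG : ∀ k, HasLaw (G k) (gammaMeasure t₂ t₂) μ) (hH : HasLaw H (gammaMeasure t₁ t₁) μ)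
    (hGG : Pairwise fun k l => IndepFun (G k) (G l) μ)
    (hGH : IndepFun (fun ω => ∑ k, G k ω) H μ) :
    MemLp (fun ω => (∑ k, G k ω) * H ω) 2 μ ∧
      μ[fun ω => (∑ k, G k ω) * H ω] = (Fintype.card κ : ℝ) ∧
      Var[fun ω => (∑ k, G k ω) * H ω; μ] =
        Fintype.card κ * (1 + t₁ + Fintype.card κ * t₂) / (t₁ * t₂) := by
  have hGmem k := (hG k).memLp_two_of_gammaMeasure ht₂ ht₂
  have hHmem := hH.memLp_two_of_gammaMeasure ht₁ ht₁
  have hSmem : MemLp (fun ω => ∑ k, G k ω) 2 μ := memLp_finsetSum _ fun k _ => hGmem k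
  have hSint : μ[fun ω => ∑ k, G k ω] = (Fintype.card κ : ℝ) := by
    simp [integral_finsetSum _ fun k _ => (hGmem k).integrable one_le_two,
      (hG _).integral_eq_of_gammaMeasure ht₂ ht₂, ht₂.ne']
  have hSvar : Var[fun ω => ∑ k, G k ω; μ] = Fintype.card κ / t₂ := by
    rw [IndepFun.variance_fun_sum (fun k _ => hGmem k) fun k _ l _ hkl => hGG hkl]
    simp [(hG _).variance_eq_of_gammaMeasure ht₂ ht₂]
    field_simp
  have hHint : μ[H] = 1 := by rw [hH.integral_eq_of_gammaMeasure ht₁ ht₁, div_self ht₁.ne']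
  refine ⟨hGH.memLp_two_mul hSmem hHmem, ?_, ?_⟩
  · rw [hGH.integral_fun_mul_eq_mul_integral hSmem.1 hHmem.1, hSint, hHint, mul_one]
  · rw [hGH.variance_mul hSmem hHmem, hSvar, hH.variance_eq_of_gammaMeasure ht₁ ht₁, hSint,
      hHint]
    field_simp

end GammaBranch

end ProbabilityTheory

theorem stmt_7_general (t₁ t₂ : ℝ) (ht₁ : 0 < t₁) (ht₂ : 0 < t₂) (N Q : ℕ)
    {Ω : Type*} [MeasurableSpace Ω] (μ : Measure Ω) [IsProbabilityMeasure μ]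
    (G : Fin N → Fin Q → Ω → ℝ) (H : Fin N → Ω → ℝ)
    (hGmeas : ∀ n k, Measurable (G n k)) (hHmeas : ∀ n, Measurable (H n))
    (hindep : iIndepFun
      (Sum.elim (fun p : Fin N × Fin Q => G p.1 p.2) H) μ)
    (hG : ∀ n k, Measure.map (G n k) μ = gammaMeasure t₂ t₂)
    (hH : ∀ n, Measure.map (H n) μ = gammaMeasure t₁ t₁) :
    (∫ ω, (∑ n : Fin N, (∑ k : Fin Q, G n k ω) * H n ω) ∂μ) = N * Q ∧
    variance (fun ω => ∑ n : Fin N, (∑ k : Fin Q, G n k ω) * H n ω) μ =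
      N * Q * (1 + t₁ + Q * t₂) / (t₁ * t₂) := by
  have hY n := sum_mul_moments_of_hasLaw_gammaMeasure ht₁ ht₂
    (fun k => ⟨(hGmeas n k).aemeasurable, hG n k⟩) ⟨(hHmeas n).aemeasurable, hH n⟩
    (fun k l hkl => hindep.indepFun (i := .inl (n, k)) (j := .inl (n, l)) (by simpa using hkl))
    (hindep.indepFun_sum_of_sumElim hGmeas hHmeas n)
  simp only [Fintype.card_fin] at hY
  refine ⟨?_, ?_⟩
  · rw [integral_finsetSum _ fun n _ => (hY n).1.integrable one_le_two]
    simp [(hY _).2.1]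
  · rw [IndepFun.variance_fun_sum (fun n _ => (hY n).1)
      fun n _ m _ hnm => hindep.indepFun_sum_mul_of_sumElim hGmeas hHmeas hnm]
    simp only [(hY _).2.2, Finset.sum_const, Finset.card_univ, Fintype.card_fin, nsmul_eq_mul]
    ring

theorem stmt_7 (t₁ t₂ : ℝ) (ht₁ : 0 < t₁) (ht₂ : 0 < t₂) (N Q : ℕ) (hN : 0 < N) (hQ : 0 < Q)
    {Ω : Type*} [MeasurableSpace Ω] (μ : Measure Ω) [IsProbabilityMeasure μ]
    (G : Fin N → Fin Q → Ω → ℝ) (H : Fin N → Ω → ℝ)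
    (hGmeas : ∀ n k, Measurable (G n k)) (hHmeas : ∀ n, Measurable (H n))
    (hindep : iIndepFun
      (Sum.elim (fun p : Fin N × Fin Q => G p.1 p.2) H) μ)
    (hG : ∀ n k, Measure.map (G n k) μ = gammaMeasure t₂ t₂)
    (hH : ∀ n, Measure.map (H n) μ = gammaMeasure t₁ t₁) :
    (∫ ω, (∑ n : Fin N, (∑ k : Fin Q, G n k ω) * H n ω) ∂μ) = N * Q ∧
    variance (fun ω => ∑ n : Fin N, (∑ k : Fin Q, G n k ω) * H n ω) μ =
      N * Q * (1 + t₁ + Q * t₂) / (t₁ * t₂) :=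
  stmt_7_general t₁ t₂ ht₁ ht₂ N Q μ G H hGmeas hHmeas hindep hG hH
end

section
/- Let a > 0, α > 0, c > 0, x > 0 and 0 < r₀ < R be real numbers, and set δ₂ = 2/α. Then ∫_{r₀}^{R} Γᵤ(a, c x r^α) · r dr = (1/2) · [ R² Γᵤ(a, c x R^α) − (cx)^{−δ₂} Γᵤ(a+δ₂, c x R^α) − r₀² Γᵤ(a, c x r₀^α) + (cx)^{−δ₂} Γᵤ(a+δ₂, c x r₀^α) ]. (This is the closed form (E.5) of the complementary distribution function λ(x) = 1 − F(x) of the SNR in the proof of Theorem 3, up to the constant φ.) -/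
open MeasureTheory

/-- Upper incomplete gamma function `Γᵤ(a, x) = ∫ₓ^∞ t^(a-1) e^(-t) dt`. -/
noncomputable def upperGamma (a x : ℝ) : ℝ := ∫ t in Set.Ioi x, t ^ (a - 1) * Real.exp (-t)

/-!
Since `d/dy Γᵤ(a, y) = -y^(a-1) e^(-y)`, the chain rule shows that
`F(r) = r^β Γᵤ(a, k r^α) - k^(-β/α) Γᵤ(a + β/α, k r^α)` has derivative `β r^(β-1) Γᵤ(a, k r^α)`:
the two terms coming from differentiating the `Γᵤ`'s cancel, because
`k^(-β/α) (k r^α)^(a+β/α-1) = r^β (k r^α)^(a-1)`. The fundamental theorem of calculus with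
`β = 2` gives the closed form.
-/

open Set Real

namespace UpperGamma

lemma integrableOn_rpow_mul_exp_neg_Ioi {a : ℝ} (ha : 0 < a) {y : ℝ} (hy : 0 ≤ y) :
    IntegrableOn (fun t : ℝ => t ^ (a - 1) * exp (-t)) (Ioi y) :=
  ((GammaIntegral_convergent ha).mono_set (Ioi_subset_Ioi hy)).congr_fun
    (fun _ _ => mul_comm _ _) measurableSet_Ioi

lemma continuousAt_rpow_mul_exp_neg {a y : ℝ} (hy : y ≠ 0) :
    ContinuousAt (fun t : ℝ => t ^ (a - 1) * exp (-t)) y :=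
  (continuousAt_rpow_const y (a - 1) (Or.inl hy)).mul (continuous_exp.comp continuous_neg).continuousAt

lemma upperGamma_eq_sub_integral {a : ℝ} (ha : 0 < a) {y : ℝ} (hy : 0 ≤ y) :
    upperGamma a y = upperGamma a 0 - ∫ t in (0)..y, t ^ (a - 1) * exp (-t) := by
  rw [upperGamma, upperGamma,
    ← intervalIntegral.integral_Ioi_sub_Ioi (integrableOn_rpow_mul_exp_neg_Ioi ha le_rfl) hy]
  ring

theorem hasDerivAt_upperGamma {a : ℝ} (ha : 0 < a) {y : ℝ} (hy : 0 < y) :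
    HasDerivAt (upperGamma a) (-(y ^ (a - 1) * exp (-y))) y := by
  have hint : IntervalIntegrable (fun t : ℝ => t ^ (a - 1) * exp (-t)) volume 0 y :=
    (intervalIntegrable_iff_integrableOn_Ioc_of_le hy.le).2
      ((integrableOn_rpow_mul_exp_neg_Ioi ha le_rfl).mono_set Ioc_subset_Ioi_self)
  have hmeas : StronglyMeasurableAtFilter (fun t : ℝ => t ^ (a - 1) * exp (-t)) (nhds y) :=
    ⟨Ioi 0, Ioi_mem_nhds hy, (continuousOn_of_forall_continuousAt fun t ht =>
      continuousAt_rpow_mul_exp_neg (ne_of_gt ht)).aestronglyMeasurable measurableSet_Ioi⟩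
  refine ((intervalIntegral.integral_hasDerivAt_right hint hmeas
    (continuousAt_rpow_mul_exp_neg hy.ne')).const_sub (upperGamma a 0)).congr_of_eventuallyEq ?_
  filter_upwards [Ioi_mem_nhds hy] with z hz using upperGamma_eq_sub_integral ha (le_of_lt hz)

lemma hasDerivAt_upperGamma_const_mul_rpow {a α k r : ℝ} (ha : 0 < a) (hk : 0 < k) (hr : 0 < r) :
    HasDerivAt (fun r => upperGamma a (k * r ^ α))
      (-((k * r ^ α) ^ (a - 1) * exp (-(k * r ^ α))) * (k * (α * r ^ (α - 1)))) r :=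
  (hasDerivAt_upperGamma ha (by positivity)).comp r
    ((hasDerivAt_rpow_const (Or.inl hr.ne')).const_mul k)

lemma rpow_neg_div_mul_rpow_add_div {a α β k t : ℝ} (hα : α ≠ 0) (hk : 0 < k) (ht : 0 < t) :
    k ^ (-(β / α)) * (k * t ^ α) ^ (a + β / α - 1) = t ^ β * (k * t ^ α) ^ (a - 1) := by
  have hkt : 0 < k * t ^ α := by positivity
  have hpow : (k * t ^ α) ^ (β / α) = k ^ (β / α) * t ^ β := by
    rw [mul_rpow hk.le (rpow_nonneg ht.le α), ← rpow_mul ht.le, mul_div_cancel₀ β hα]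
  rw [show a + β / α - 1 = a - 1 + β / α by ring, rpow_add hkt, hpow, rpow_neg hk.le]
  field_simp

theorem hasDerivAt_rpow_mul_upperGamma_sub {a α β k r : ℝ} (ha : 0 < a) (haβ : 0 < a + β / α)
    (hα : α ≠ 0) (hk : 0 < k) (hr : 0 < r) :
    HasDerivAt
      (fun r => r ^ β * upperGamma a (k * r ^ α)
        - k ^ (-(β / α)) * upperGamma (a + β / α) (k * r ^ α))
      (β * r ^ (β - 1) * upperGamma a (k * r ^ α)) r := by
  have hD := ((hasDerivAt_rpow_const (p := β) (Or.inl hr.ne')).mul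
    (hasDerivAt_upperGamma_const_mul_rpow (α := α) ha hk hr)).sub
    ((hasDerivAt_upperGamma_const_mul_rpow (α := α) haβ hk hr).const_mul (k ^ (-(β / α))))
  have key := rpow_neg_div_mul_rpow_add_div (a := a) (β := β) hα hk hr
  refine hD.congr_deriv ?_
  linear_combination Real.exp (-(k * r ^ α)) * (k * (α * r ^ (α - 1))) * key

theorem integral_upperGamma_const_mul_rpow_mul_rpow {a α β k r₀ R : ℝ} (ha : 0 < a)
    (haβ : 0 < a + β / α) (hα : α ≠ 0) (hβ : β ≠ 0) (hk : 0 < k) (hr₀ : 0 < r₀) (hR : 0 < R) :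
    ∫ r in r₀..R, upperGamma a (k * r ^ α) * r ^ (β - 1) =
      β⁻¹ * (R ^ β * upperGamma a (k * R ^ α) - k ^ (-(β / α)) * upperGamma (a + β / α) (k * R ^ α)
        - (r₀ ^ β * upperGamma a (k * r₀ ^ α)
          - k ^ (-(β / α)) * upperGamma (a + β / α) (k * r₀ ^ α))) := by
  have hpos : ∀ r ∈ uIcc r₀ R, 0 < r := fun r hr =>
    lt_of_lt_of_le (lt_min hr₀ hR) hr.1
  have hderiv : ∀ r ∈ uIcc r₀ R, HasDerivAt
      (fun r => β⁻¹ * (r ^ β * upperGamma a (k * r ^ α)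
        - k ^ (-(β / α)) * upperGamma (a + β / α) (k * r ^ α)))
      (upperGamma a (k * r ^ α) * r ^ (β - 1)) r := fun r hr =>
    ((hasDerivAt_rpow_mul_upperGamma_sub ha haβ hα hk (hpos r hr)).const_mul β⁻¹).congr_deriv
      (by field_simp)
  have hcont : ContinuousOn (fun r => upperGamma a (k * r ^ α) * r ^ (β - 1)) (uIcc r₀ R) :=
    fun r hr => ((hasDerivAt_upperGamma_const_mul_rpow ha hk (hpos r hr)).continuousAt.mul
      (continuousAt_rpow_const r (β - 1) (Or.inl (hpos r hr).ne'))).continuousWithinAt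
  rw [intervalIntegral.integral_eq_sub_of_hasDerivAt hderiv hcont.intervalIntegrable]
  ring

end UpperGamma

theorem stmt_10 (a α c x r₀ R : ℝ) (ha : 0 < a) (hα : 0 < α) (hc : 0 < c) (hx : 0 < x)
    (hr₀ : 0 < r₀) (hR : r₀ < R) :
    (∫ r in r₀..R, upperGamma a (c * x * r ^ α) * r) =
      (1 / 2) * (R ^ 2 * upperGamma a (c * x * R ^ α)
        - (c * x) ^ (-(2 / α)) * upperGamma (a + 2 / α) (c * x * R ^ α)
        - r₀ ^ 2 * upperGamma a (c * x * r₀ ^ α)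
        + (c * x) ^ (-(2 / α)) * upperGamma (a + 2 / α) (c * x * r₀ ^ α)) := by
  have h := UpperGamma.integral_upperGamma_const_mul_rpow_mul_rpow (β := 2) ha (by positivity)
    hα.ne' two_ne_zero (mul_pos hc hx) hr₀ (hr₀.trans hR)
  norm_num only [rpow_two, rpow_one] at h
  rw [h]
  ring
end

section
/- Let X be a random variable following the Gamma distribution with shape k > 0 and rate θ > 0. Then lim_{ρ → ∞} E[log₂(1 + ρX)] / log₂(1 + ρ) = 1. (This is Proposition 2: the high-SNR slope Z = lim_{p_b/σ² → ∞} R̄_m / log₂(1 + p_b/σ²) of the ergodic rate of user m in the proposed MIMO-IRS network equals 1, independently of the number of IRS elements, the numbers of transmit/receive antennas, and the fading parameters.) -/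
open MeasureTheory ProbabilityTheory Filter Real Set Topology

/-!
For `x > 0` and `ρ ≥ 0`,
`log (min x 1) + log (1 + ρ) ≤ log (1 + ρ x) ≤ log (1 + ρ) + log (1 + x)`,
so `log (1 + ρ x) / log (1 + ρ) → 1` pointwise, and for `ρ ≥ 1` the ratio is dominated by
`1 + log (1 + x) / log 2`, which is integrable against a Gamma law because its mean is finite.
Dominated convergence gives the limit of the expectations.
-/

lemma log_one_add_mul_le {ρ x : ℝ} (hρ : 0 ≤ ρ) (hx : 0 ≤ x) :
    log (1 + ρ * x) ≤ log (1 + ρ) + log (1 + x) := by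
  rw [← log_mul (by positivity) (by positivity)]
  exact log_le_log (by positivity) (by nlinarith)

lemma log_min_one_add_log_le {ρ x : ℝ} (hρ : 0 ≤ ρ) (hx : 0 < x) :
    log (min x 1) + log (1 + ρ) ≤ log (1 + ρ * x) := by
  rw [← log_mul (by positivity) (by positivity)]
  refine log_le_log (by positivity) ?_
  nlinarith [min_le_left x 1, min_le_right x 1]

lemma tendsto_one_add_div_log_one_add (c : ℝ) :
    Tendsto (fun ρ : ℝ => 1 + c / log (1 + ρ)) atTop (𝓝 1) := by
  have hL : Tendsto (fun ρ : ℝ => log (1 + ρ)) atTop atTop :=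
    tendsto_log_atTop.comp (tendsto_atTop_add_const_left _ 1 tendsto_id)
  simpa using tendsto_const_nhds.add (tendsto_const_nhds.div_atTop hL)

lemma tendsto_log_one_add_mul_div_log_one_add {x : ℝ} (hx : 0 < x) :
    Tendsto (fun ρ : ℝ => log (1 + ρ * x) / log (1 + ρ)) atTop (𝓝 1) := by
  refine tendsto_of_tendsto_of_tendsto_of_le_of_le'
    (tendsto_one_add_div_log_one_add (log (min x 1)))
    (tendsto_one_add_div_log_one_add (log (1 + x))) ?_ ?_
  all_goals
    filter_upwards [eventually_gt_atTop 0] with ρ hρ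
    have hL : 0 < log (1 + ρ) := log_pos (by linarith)
    rw [one_add_div hL.ne', div_le_div_iff_of_pos_right hL]
  · linarith [log_min_one_add_log_le hρ.le hx]
  · linarith [log_one_add_mul_le hρ.le hx.le]

lemma log_one_add_mul_div_log_one_add_le {ρ x : ℝ} (hρ : 1 ≤ ρ) (hx : 0 ≤ x) :
    log (1 + ρ * x) / log (1 + ρ) ≤ 1 + log (1 + x) / log 2 := by
  have hL : 0 < log (1 + ρ) := log_pos (by linarith)
  calc log (1 + ρ * x) / log (1 + ρ) ≤ 1 + log (1 + x) / log (1 + ρ) := by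
        rw [one_add_div hL.ne', div_le_div_iff_of_pos_right hL]
        linarith [log_one_add_mul_le (zero_le_one.trans hρ) hx]
    _ ≤ 1 + log (1 + x) / log 2 := by
        gcongr
        · exact log_nonneg (by linarith)
        · linarith

theorem tendsto_integral_log_one_add_mul_div_log_one_add {Ω : Type*} [MeasurableSpace Ω]
    {μ : Measure Ω} [IsProbabilityMeasure μ] {X : Ω → ℝ} (hXm : AEMeasurable X μ)
    (hpos : ∀ᵐ ω ∂μ, 0 < X ω) (hint : Integrable (fun ω => log (1 + X ω)) μ) :
    Tendsto (fun ρ : ℝ => (∫ ω, log (1 + ρ * X ω) ∂μ) / log (1 + ρ)) atTop (𝓝 1) := by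
  simp_rw [← integral_div]
  have hlim := tendsto_integral_filter_of_dominated_convergence
    (F := fun ρ ω => log (1 + ρ * X ω) / log (1 + ρ)) (f := fun _ => (1 : ℝ))
    (fun ω => 1 + log (1 + X ω) / log 2)
    (Eventually.of_forall fun ρ =>
      ((measurable_log.comp_aemeasurable (by fun_prop)).div_const _).aestronglyMeasurable)
    ?_ ((integrable_const 1).add (hint.div_const _))
    (hpos.mono fun ω hω => tendsto_log_one_add_mul_div_log_one_add hω)
  · simpa using hlim
  filter_upwards [eventually_ge_atTop 1] with ρ hρ
  filter_upwards [hpos] with ω hω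
  have hL : 0 < log (1 + ρ) := log_pos (by linarith)
  rw [norm_of_nonneg (div_nonneg (log_nonneg (by nlinarith)) hL.le)]
  exact log_one_add_mul_div_log_one_add_le hρ hω.le

lemma gammaMeasure_Iic_zero (k θ : ℝ) : gammaMeasure k θ (Iic 0) = 0 := by
  rw [gammaMeasure, withDensity_apply _ measurableSet_Iic,
    setLIntegral_congr Iio_ae_eq_Iic.symm, lintegral_gammaPDF_of_nonpos le_rfl]

lemma ae_pos_gammaMeasure (k θ : ℝ) : ∀ᵐ x ∂gammaMeasure k θ, 0 < x := by
  rw [ae_iff]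
  simp only [not_lt]
  exact gammaMeasure_Iic_zero k θ

lemma mul_gammaPDFReal {k θ : ℝ} (hk : 0 < k) (hθ : 0 < θ) (x : ℝ) :
    x * gammaPDFReal k θ x = k / θ * gammaPDFReal (k + 1) θ x := by
  unfold gammaPDFReal
  rcases lt_trichotomy x 0 with hx | rfl | hx
  · simp [if_neg (not_le.mpr hx)]
  · simp [zero_rpow hk.ne']
  · rw [if_pos hx.le, if_pos hx.le, add_sub_cancel_right, Gamma_add_one hk.ne',
      rpow_add_one hθ.ne', rpow_sub_one hx.ne']
    have := (Gamma_pos_of_pos hk).ne'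
    field_simp

lemma integrable_gammaPDFReal {k θ : ℝ} (hk : 0 < k) (hθ : 0 < θ) :
    Integrable (gammaPDFReal k θ) := by
  refine ⟨(measurable_gammaPDFReal k θ).aestronglyMeasurable, ?_⟩
  rw [hasFiniteIntegral_iff_ofReal (ae_of_all _ (gammaPDFReal_nonneg hk hθ))]
  exact (lintegral_gammaPDF_eq_one hk hθ).trans_lt ENNReal.one_lt_top

lemma integrable_id_gammaMeasure {k θ : ℝ} (hk : 0 < k) (hθ : 0 < θ) :
    Integrable id (gammaMeasure k θ) := by
  rw [gammaMeasure, integrable_withDensity_iff (f := gammaPDF k θ)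
    (measurable_gammaPDFReal k θ).ennreal_ofReal (ae_of_all _ fun _ => ENNReal.ofReal_lt_top)]
  simp_rw [gammaPDF, ENNReal.toReal_ofReal (gammaPDFReal_nonneg hk hθ _), id,
    mul_gammaPDFReal hk hθ]
  exact (integrable_gammaPDFReal (by linarith) hθ).const_mul _

lemma integrable_log_one_add_gammaMeasure {k θ : ℝ} (hk : 0 < k) (hθ : 0 < θ) :
    Integrable (fun x => log (1 + x)) (gammaMeasure k θ) := by
  refine (integrable_id_gammaMeasure hk hθ).mono
    (measurable_log.comp (by fun_prop)).aestronglyMeasurable ?_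
  filter_upwards [ae_pos_gammaMeasure k θ] with x hx
  rw [id, norm_of_nonneg (log_nonneg (by linarith)), norm_of_nonneg hx.le]
  linarith [log_le_sub_one_of_pos (show 0 < 1 + x by linarith)]

theorem stmt_11 (k θ : ℝ) (hk : 0 < k) (hθ : 0 < θ)
    {Ω : Type*} [MeasurableSpace Ω] (μ : Measure Ω) [IsProbabilityMeasure μ]
    (X : Ω → ℝ) (hXm : Measurable X)
    (hX : Measure.map X μ = gammaMeasure k θ) :
    Tendsto (fun ρ : ℝ => (∫ ω, Real.logb 2 (1 + ρ * X ω) ∂μ) / Real.logb 2 (1 + ρ))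
      atTop (nhds 1) := by
  have hpos : ∀ᵐ ω ∂μ, 0 < X ω :=
    ae_of_ae_map hXm.aemeasurable (hX ▸ ae_pos_gammaMeasure k θ)
  have hint : Integrable (fun ω => log (1 + X ω)) μ :=
    (hX ▸ integrable_log_one_add_gammaMeasure hk hθ).comp_measurable hXm
  refine (tendsto_integral_log_one_add_mul_div_log_one_add hXm.aemeasurable hpos hint).congr
    fun ρ => ?_
  simp only [logb, integral_div]
  rw [div_div_div_cancel_right₀ (log_pos one_lt_two).ne']
end
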